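/- Define F(t,s) = (cos(s)·e^{it}, (sin(s)/√2)·e^{2it}). The area of the surface F over the domain [0,2π] × [0,π/2], computed as the integral of √(|F_t|^2|F_s|^2 - (F_t·F_s)^2) dt ds, equals 3π^2/(2√2). -/

import Mathlib

open Real Complex

/-- The Möbius-band surface `F(t,s) = (cos s · e^{it}, (sin s / √2) · e^{2it})` in `ℂ²`. -/
noncomputable def Fmob (t s : ℝ) : ℂ × ℂ :=
  ((Real.cos s : ℂ) * Complex.exp (t * Complex.I),
   ((Real.sin s / Real.sqrt 2 : ℝ) : ℂ) * Complex.exp (2 * t * Complex.I))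

/-- The Hermitian inner product on `ℂ² ≅ ℝ⁴`; its real part is the Euclidean
inner product, its imaginary part is the standard symplectic form. -/
noncomputable def hermC2 (u v : ℂ × ℂ) : ℂ :=
  starRingEnd ℂ u.1 * v.1 + starRingEnd ℂ u.2 * v.2

/-- Partial derivative of `Fmob` in `t`. -/
noncomputable def FmobT (t s : ℝ) : ℂ × ℂ := deriv (fun t' => Fmob t' s) t

/-- Partial derivative of `Fmob` in `s`. -/
noncomputable def FmobS (t s : ℝ) : ℂ × ℂ := deriv (fun s' => Fmob t s') s

/- ### Auxiliary lemmas -/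

lemma hasDerivAt_exp_mul_I (t : ℝ) (c : ℂ) :
    HasDerivAt (fun t' : ℝ => Complex.exp (c * t' * Complex.I))
      (c * Complex.I * Complex.exp (c * t * Complex.I)) t := by
  have h1 : HasDerivAt (fun z : ℂ => Complex.exp (c * z * Complex.I))
      (Complex.exp (c * t * Complex.I) * (c * Complex.I)) (t : ℂ) := by
    have h2 : HasDerivAt (fun z : ℂ => c * z * Complex.I) (c * Complex.I) (t : ℂ) := by
      simpa using ((hasDerivAt_id (t:ℂ)).const_mul c).mul_const Complex.I
    exact (Complex.hasDerivAt_exp _).comp _ h2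
  simpa [mul_comm] using h1.comp_ofReal

lemma FmobT_eq (t s : ℝ) : FmobT t s =
    ((Real.cos s : ℂ) * (Complex.I * Complex.exp (t * Complex.I)),
     ((Real.sin s / Real.sqrt 2 : ℝ) : ℂ) * (2 * Complex.I * Complex.exp (2 * t * Complex.I))) := by
  have h1 := (hasDerivAt_exp_mul_I t 1).const_mul (Real.cos s : ℂ)
  have h2 := (hasDerivAt_exp_mul_I t 2).const_mul ((Real.sin s / Real.sqrt 2 : ℝ) : ℂ)
  have := (h1.prodMk h2).deriv
  simp only [one_mul] at this
  simpa [FmobT, Fmob, mul_assoc] using this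

lemma FmobS_eq (t s : ℝ) : FmobS t s =
    ((-Real.sin s : ℝ) * Complex.exp (t * Complex.I),
     ((Real.cos s / Real.sqrt 2 : ℝ) : ℂ) * Complex.exp (2 * t * Complex.I)) := by
  have h1 : HasDerivAt (fun s' : ℝ => ((Real.cos s' : ℝ) : ℂ))
      ((-Real.sin s : ℝ) : ℂ) s := (Real.hasDerivAt_cos s).ofReal_comp
  have h2 : HasDerivAt (fun s' : ℝ => ((Real.sin s' / Real.sqrt 2 : ℝ) : ℂ))
      ((Real.cos s / Real.sqrt 2 : ℝ) : ℂ) s := by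
    have := ((Real.hasDerivAt_sin s).div_const (Real.sqrt 2)).ofReal_comp
    simpa using this
  have := ((h1.mul_const (Complex.exp (t * Complex.I))).prodMk
    (h2.mul_const (Complex.exp (2 * t * Complex.I)))).deriv
  simpa [FmobS, Fmob] using this

lemma conj_exp_key (z : ℂ) (h : starRingEnd ℂ z = -z) :
    starRingEnd ℂ (Complex.exp z) * Complex.exp z = 1 := by
  rw [← Complex.exp_conj, ← Complex.exp_add, h, neg_add_cancel, Complex.exp_zero]

lemma h1' (t : ℝ) : starRingEnd ℂ (Complex.exp (t * Complex.I)) * Complex.exp (t * Complex.I) = 1 :=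
  conj_exp_key _ (by simp)

lemma h2' (t : ℝ) : starRingEnd ℂ (Complex.exp (2 * t * Complex.I)) * Complex.exp (2 * t * Complex.I) = 1 := by
  refine conj_exp_key _ ?_
  rw [map_mul, map_mul, Complex.conj_I, Complex.conj_ofReal, map_ofNat]
  ring

lemma hr' (s : ℝ) : ((Real.sin s / Real.sqrt 2 : ℝ) : ℂ) ^ 2 = (Real.sin s : ℂ) ^ 2 / 2 := by
  have h : (Real.sin s / Real.sqrt 2) ^ 2 = Real.sin s ^ 2 / 2 := by
    rw [div_pow, Real.sq_sqrt] <;> norm_num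
  rw [← Complex.ofReal_pow, h]; push_cast; ring

lemma hr2' (s : ℝ) : ((Real.cos s / Real.sqrt 2 : ℝ) : ℂ) ^ 2 = (Real.cos s : ℂ) ^ 2 / 2 := by
  have h : (Real.cos s / Real.sqrt 2) ^ 2 = Real.cos s ^ 2 / 2 := by
    rw [div_pow, Real.sq_sqrt] <;> norm_num
  rw [← Complex.ofReal_pow, h]; push_cast; ring

lemma hc' (s : ℝ) : (Real.cos s : ℂ) ^ 2 + (Real.sin s : ℂ) ^ 2 = 1 := by
  norm_cast; exact Real.cos_sq_add_sin_sq s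

lemma hermTT (t s : ℝ) :
    (hermC2 ((Real.cos s : ℂ) * (Complex.I * Complex.exp (t * Complex.I)),
     ((Real.sin s / Real.sqrt 2 : ℝ) : ℂ) * (2 * Complex.I * Complex.exp (2 * t * Complex.I)))
     ((Real.cos s : ℂ) * (Complex.I * Complex.exp (t * Complex.I)),
     ((Real.sin s / Real.sqrt 2 : ℝ) : ℂ) * (2 * Complex.I * Complex.exp (2 * t * Complex.I)))).re
    = 1 + Real.sin s ^ 2 := by
  have key : hermC2 ((Real.cos s : ℂ) * (Complex.I * Complex.exp (t * Complex.I)),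
     ((Real.sin s / Real.sqrt 2 : ℝ) : ℂ) * (2 * Complex.I * Complex.exp (2 * t * Complex.I)))
     ((Real.cos s : ℂ) * (Complex.I * Complex.exp (t * Complex.I)),
     ((Real.sin s / Real.sqrt 2 : ℝ) : ℂ) * (2 * Complex.I * Complex.exp (2 * t * Complex.I)))
      = ((1 + Real.sin s ^ 2 : ℝ) : ℂ) := by
    simp only [hermC2, map_mul, Complex.conj_I, Complex.conj_ofReal, map_ofNat,
      Complex.ofReal_add, Complex.ofReal_pow, Complex.ofReal_one]
    linear_combination ((Real.cos s : ℂ)^2) * h1' t +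
      (4 * ((Real.sin s / Real.sqrt 2 : ℝ) : ℂ)^2) * h2' t +
      (-(Real.cos s : ℂ)^2 * (starRingEnd ℂ (Complex.exp (t * Complex.I)) * Complex.exp (t * Complex.I))
       - 4 * ((Real.sin s / Real.sqrt 2 : ℝ) : ℂ)^2 *
         (starRingEnd ℂ (Complex.exp (2 * t * Complex.I)) * Complex.exp (2 * t * Complex.I))) * Complex.I_sq +
      4 * hr' s + hc' s
  rw [key, Complex.ofReal_re]

lemma hr2'' (s : ℝ) : ((Real.cos s : ℂ) / ((Real.sqrt 2:ℝ):ℂ)) ^ 2 = (Real.cos s : ℂ) ^ 2 / 2 := by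
  rw [← Complex.ofReal_div]; exact hr2' s

lemma hprod' (s : ℝ) : ((Real.sin s / Real.sqrt 2 : ℝ) : ℂ) * ((Real.cos s / Real.sqrt 2 : ℝ) : ℂ)
    = (Real.sin s : ℂ) * (Real.cos s : ℂ) / 2 := by
  have h : (Real.sin s / Real.sqrt 2) * (Real.cos s / Real.sqrt 2) = Real.sin s * Real.cos s / 2 := by
    rw [div_mul_div_comm, Real.mul_self_sqrt] <;> norm_num
  rw [← Complex.ofReal_mul, h]; push_cast; ring

lemma hprod'' (s : ℝ) : ((Real.sin s : ℂ) / ((Real.sqrt 2:ℝ):ℂ)) * ((Real.cos s : ℂ) / ((Real.sqrt 2:ℝ):ℂ))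
    = (Real.sin s : ℂ) * (Real.cos s : ℂ) / 2 := by
  rw [← Complex.ofReal_div, ← Complex.ofReal_div]; exact hprod' s

lemma hermSS (t s : ℝ) :
    (hermC2 (((-Real.sin s : ℝ) : ℂ) * Complex.exp (t * Complex.I),
     ((Real.cos s / Real.sqrt 2 : ℝ) : ℂ) * Complex.exp (2 * t * Complex.I))
     (((-Real.sin s : ℝ) : ℂ) * Complex.exp (t * Complex.I),
     ((Real.cos s / Real.sqrt 2 : ℝ) : ℂ) * Complex.exp (2 * t * Complex.I))).re
    = (1 + Real.sin s ^ 2) / 2 := by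
  have key : hermC2 (((-Real.sin s : ℝ) : ℂ) * Complex.exp (t * Complex.I),
     ((Real.cos s / Real.sqrt 2 : ℝ) : ℂ) * Complex.exp (2 * t * Complex.I))
     (((-Real.sin s : ℝ) : ℂ) * Complex.exp (t * Complex.I),
     ((Real.cos s / Real.sqrt 2 : ℝ) : ℂ) * Complex.exp (2 * t * Complex.I))
      = (((1 + Real.sin s ^ 2) / 2 : ℝ) : ℂ) := by
    simp only [hermC2, map_mul, map_neg, map_div₀, Complex.conj_ofReal, Complex.ofReal_add,
      Complex.ofReal_div, Complex.ofReal_pow, Complex.ofReal_one, Complex.ofReal_neg,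
      Complex.ofReal_ofNat]
    linear_combination ((Real.sin s : ℂ)^2) * h1' t +
      (((Real.cos s : ℂ) / ((Real.sqrt 2:ℝ):ℂ))^2) * h2' t + hr2'' s + (1/2 : ℂ) * hc' s
  rw [key, Complex.ofReal_re]

lemma hermTS (t s : ℝ) :
    (hermC2 ((Real.cos s : ℂ) * (Complex.I * Complex.exp (t * Complex.I)),
     ((Real.sin s / Real.sqrt 2 : ℝ) : ℂ) * (2 * Complex.I * Complex.exp (2 * t * Complex.I)))
     (((-Real.sin s : ℝ) : ℂ) * Complex.exp (t * Complex.I),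
     ((Real.cos s / Real.sqrt 2 : ℝ) : ℂ) * Complex.exp (2 * t * Complex.I))).re = 0 := by
  have key : hermC2 ((Real.cos s : ℂ) * (Complex.I * Complex.exp (t * Complex.I)),
     ((Real.sin s / Real.sqrt 2 : ℝ) : ℂ) * (2 * Complex.I * Complex.exp (2 * t * Complex.I)))
     (((-Real.sin s : ℝ) : ℂ) * Complex.exp (t * Complex.I),
     ((Real.cos s / Real.sqrt 2 : ℝ) : ℂ) * Complex.exp (2 * t * Complex.I))
      = Complex.I * ((Real.sin s : ℂ) * (Real.cos s : ℂ)) -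
        Complex.I * ((Real.sin s : ℂ) * (Real.cos s : ℂ)) := by
    simp only [hermC2, map_mul, map_neg, map_div₀, Complex.conj_I, Complex.conj_ofReal,
      map_ofNat, Complex.ofReal_neg, Complex.ofReal_div]
    linear_combination (Complex.I * (Real.sin s : ℂ) * (Real.cos s : ℂ)) * h1' t -
      (2 * Complex.I * ((Real.sin s : ℂ) / ((Real.sqrt 2:ℝ):ℂ)) * ((Real.cos s : ℂ) / ((Real.sqrt 2:ℝ):ℂ))) * h2' t -
      2 * Complex.I * hprod'' s
  rw [key]; simp

lemma integrand_eq (t s : ℝ) :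
    Real.sqrt ((hermC2 (FmobT t s) (FmobT t s)).re *
        (hermC2 (FmobS t s) (FmobS t s)).re -
        ((hermC2 (FmobT t s) (FmobS t s)).re) ^ 2)
    = (1 + Real.sin s ^ 2) / Real.sqrt 2 := by
  rw [FmobT_eq, FmobS_eq, hermTT, hermSS, hermTS]
  have h : (1 + Real.sin s ^ 2) * ((1 + Real.sin s ^ 2) / 2) - 0 ^ 2
      = ((1 + Real.sin s ^ 2) / Real.sqrt 2) ^ 2 := by
    rw [div_pow, Real.sq_sqrt] <;> norm_num <;> ring
  rw [h, Real.sqrt_sq (by positivity)]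

/-- The area of the Möbius surface `F` over `[0,2π] × [0,π/2]`,
`∫∫ √(|F_t|²|F_s|² − (F_t·F_s)²) dt ds`, equals `3π²/(2√2)`. -/
theorem Fmob_area :
    ∫ p in Set.Icc (0:ℝ) (2 * π) ×ˢ Set.Icc (0:ℝ) (π / 2),
      Real.sqrt ((hermC2 (FmobT p.1 p.2) (FmobT p.1 p.2)).re *
          (hermC2 (FmobS p.1 p.2) (FmobS p.1 p.2)).re -
          ((hermC2 (FmobT p.1 p.2) (FmobS p.1 p.2)).re) ^ 2)
      = 3 * π ^ 2 / (2 * Real.sqrt 2) := by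
  simp only [integrand_eq]
  have hcont : Continuous (fun p : ℝ × ℝ => (1 + Real.sin p.2 ^ 2) / Real.sqrt 2) := by
    fun_prop
  have hint : MeasureTheory.IntegrableOn (fun p : ℝ × ℝ => (1 + Real.sin p.2 ^ 2) / Real.sqrt 2)
      (Set.Icc (0:ℝ) (2 * π) ×ˢ Set.Icc (0:ℝ) (π / 2)) := by
    exact hcont.continuousOn.integrableOn_compact (isCompact_Icc.prod isCompact_Icc)
  rw [MeasureTheory.Measure.volume_eq_prod ℝ ℝ, MeasureTheory.setIntegral_prod _ hint]
  have hin : ∫ y in Set.Icc (0:ℝ) (π / 2), (1 + Real.sin y ^ 2) / Real.sqrt 2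
      = (3 * π / 4) / Real.sqrt 2 := by
    rw [MeasureTheory.integral_Icc_eq_integral_Ioc,
      ← intervalIntegral.integral_of_le (by positivity : (0:ℝ) ≤ π / 2)]
    rw [intervalIntegral.integral_div]
    congr 1
    have h1 : IntervalIntegrable (fun _ : ℝ => (1:ℝ)) MeasureTheory.volume 0 (π/2) :=
      intervalIntegrable_const
    have h2 : IntervalIntegrable (fun y : ℝ => Real.sin y ^ 2) MeasureTheory.volume 0 (π/2) := by
      apply Continuous.intervalIntegrable; fun_prop
    rw [intervalIntegral.integral_add h1 h2, integral_sin_sq]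
    simp [Real.cos_pi_div_two]
    ring
  simp only [hin]
  rw [MeasureTheory.setIntegral_const]
  rw [Real.volume_real_Icc_of_le (by positivity)]
  rw [smul_eq_mul]
  ring
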